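/- arXiv:1305.2155 — 3 statements merged into one kernel-verified Lean document; each statement's English description precedes it below -/
import Mathlib

section
/- Consequently, if every subset of the ambient structure has nonnegative predimension, then: a clique C with |C| > 4 has multiplicity at most 1; with |C| = 4, multiplicity at most 2; with |C| = 3, multiplicity at most 3. Equivalently, m(C) ≤ 1 + 2/(|C| − 2) for |C| ≥ 3. -/
/-!
Each of the `m` common pairs of `C` forms a triple with each `c ∈ C`, and distinct choices give
distinct triples. So `X = C ∪ ⋃ pairs` has `r(X) ≥ m·|C|` but `|X| ≤ |C| + 2m`, and `d₀(X) ≥ 0`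
yields `m·|C| ≤ |C| + 2m`, i.e. `m·(|C| - 2) ≤ |C|`.
-/

variable {α : Type*} [DecidableEq α]

/-- `R` is a symmetric, irreflexive ternary relation. -/
def SymIrr (R : α → α → α → Prop) : Prop :=
  (∀ x y z, R x y z → R y x z) ∧ (∀ x y z, R x y z → R x z y) ∧
  (∀ x y z, R x y z → x ≠ y ∧ x ≠ z ∧ y ≠ z)

/-- `r(X)`: the number of three-element subsets `{x,y,z}` of `X` with `R x y z`. -/
noncomputable def rCount (R : α → α → α → Prop) (X : Finset α) : ℕ :=
  {s : Finset α | s ⊆ X ∧ ∃ x y z : α, x ≠ y ∧ x ≠ z ∧ y ≠ z ∧ s = {x, y, z} ∧ R x y z}.ncard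

/-- The predimension `d₀(X) = |X| - r(X)`. -/
noncomputable def d0 (R : α → α → α → Prop) (X : Finset α) : ℤ :=
  (X.card : ℤ) - (rCount R X : ℤ)

/-- The multiplicity `m(C)` of `C` inside the ambient structure `B`: the number of
distinct pairs `{b₁,b₂} ⊆ B` disjoint from `C` with `R c b₁ b₂` for all `c ∈ C`. -/
noncomputable def mult (R : α → α → α → Prop) (B C : Finset α) : ℕ :=
  {w : Finset α | w.card = 2 ∧ w ⊆ B ∧ Disjoint w C ∧
    ∀ c ∈ C, ∀ x ∈ w, ∀ y ∈ w, x ≠ y → R c x y}.ncard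

def IsCommonPair (R : α → α → α → Prop) (C w : Finset α) : Prop :=
  w.card = 2 ∧ Disjoint w C ∧ ∀ c ∈ C, ∀ x ∈ w, ∀ y ∈ w, x ≠ y → R c x y

theorem card_le_rCount (R : α → α → α → Prop) {X : Finset α} (T : Finset (Finset α))
    (hT : ∀ s ∈ T, s ⊆ X ∧ ∃ x y z : α, x ≠ y ∧ x ≠ z ∧ y ≠ z ∧ s = {x, y, z} ∧ R x y z) :
    T.card ≤ rCount R X := by
  rw [rCount, ← Set.ncard_coe_finset]
  refine Set.ncard_le_ncard (fun s hs => hT s hs) ?_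
  exact X.powerset.finite_toSet.subset fun s hs => Finset.mem_powerset.mpr hs.1

theorem IsCommonPair.exists_triple {R : α → α → α → Prop} {C w : Finset α}
    (hw : IsCommonPair R C w) {c : α} (hc : c ∈ C) :
    ∃ x y z : α, x ≠ y ∧ x ≠ z ∧ y ≠ z ∧ insert c w = {x, y, z} ∧ R x y z := by
  obtain ⟨hcard, hdisj, hR⟩ := hw
  obtain ⟨b₁, b₂, hb, rfl⟩ := Finset.card_eq_two.mp hcard
  have hcw : c ∉ ({b₁, b₂} : Finset α) := fun h => Finset.disjoint_left.mp hdisj h hc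
  simp only [Finset.mem_insert, Finset.mem_singleton, not_or] at hcw
  exact ⟨c, b₁, b₂, hcw.1, hcw.2, hb, rfl, hR c hc b₁ (by simp) b₂ (by simp) hb⟩

/-- Adding one point of `C` to a set disjoint from `C` can be undone: the added point is
recovered as the intersection with `C`, the set as the difference. -/
theorem injOn_insert_of_disjoint (C : Finset α) :
    Set.InjOn (fun p : Finset α × α => insert p.2 p.1) {p | Disjoint p.1 C ∧ p.2 ∈ C} := by
  have inter : ∀ p ∈ {p : Finset α × α | Disjoint p.1 C ∧ p.2 ∈ C}, insert p.2 p.1 ∩ C = {p.2} :=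
    fun p hp => by
      rw [Finset.insert_inter_of_mem hp.2, Finset.disjoint_iff_inter_eq_empty.mp hp.1]; rfl
  have sdiff : ∀ p ∈ {p : Finset α × α | Disjoint p.1 C ∧ p.2 ∈ C}, insert p.2 p.1 \ C = p.1 :=
    fun p hp => by rw [Finset.insert_sdiff_of_mem _ hp.2, Finset.sdiff_eq_self_of_disjoint hp.1]
  intro p hp q hq h
  have h' : insert p.2 p.1 = insert q.2 q.1 := h
  refine Prod.ext ?_ ?_
  · rw [← sdiff p hp, ← sdiff q hq, h']
  · exact Finset.singleton_injective (by rw [← inter p hp, ← inter q hq, h'])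

theorem card_mul_card_le_rCount (R : α → α → α → Prop) {C X : Finset α} (W : Finset (Finset α))
    (hW : ∀ w ∈ W, IsCommonPair R C w) (hX : C ∪ W.biUnion id ⊆ X) :
    W.card * C.card ≤ rCount R X := by
  rw [← Finset.card_product, ← Finset.card_image_of_injOn
    ((injOn_insert_of_disjoint C).mono fun p hp => ?_)]
  · refine card_le_rCount R _ fun s hs => ?_
    obtain ⟨⟨w, c⟩, hp, rfl⟩ := Finset.mem_image.mp hs
    obtain ⟨hw, hc⟩ := Finset.mem_product.mp hp
    refine ⟨Finset.insert_subset (hX (Finset.mem_union_left _ hc)) fun x hx => ?_,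
      (hW w hw).exists_triple hc⟩
    exact hX (Finset.mem_union_right _ (Finset.mem_biUnion.mpr ⟨w, hw, hx⟩))
  · obtain ⟨hw, hc⟩ := Finset.mem_product.mp hp
    exact ⟨(hW _ hw).2.1, hc⟩

theorem mult_mul_card_le (R : α → α → α → Prop) {B C : Finset α} (hCB : C ⊆ B)
    (hd : ∀ X : Finset α, X ⊆ B → 0 ≤ d0 R X) :
    mult R B C * C.card ≤ C.card + 2 * mult R B C := by
  classical
  set W := B.powerset.filter (IsCommonPair R C)
  have hmult : mult R B C = W.card := by
    rw [mult, ← Set.ncard_coe_finset]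
    congr 1
    ext w
    simp only [IsCommonPair, Set.mem_ofPred_eq, W, Finset.coe_filter, Finset.mem_powerset]
    tauto
  have hW : ∀ w ∈ W, IsCommonPair R C w := fun w hw => (Finset.mem_filter.mp hw).2
  set X := C ∪ W.biUnion id
  have hXB : X ⊆ B := Finset.union_subset hCB <| Finset.biUnion_subset.mpr fun w hw =>
    Finset.mem_powerset.mp (Finset.mem_filter.mp hw).1
  have hX : X.card ≤ C.card + W.card * 2 :=
    (Finset.card_union_le _ _).trans <| Nat.add_le_add_left
      (Finset.card_biUnion_le_card_mul W id 2 fun w hw => (hW w hw).1.le) _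
  have hr : (rCount R X : ℤ) ≤ X.card := by have := hd X hXB; rw [d0] at this; omega
  have := card_mul_card_le_rCount R (X := X) W hW le_rfl
  rw [hmult]
  omega

theorem mul_sub_two_le_of_mul_le {m c : ℕ} (h : m * c ≤ c + 2 * m) : m * (c - 2) ≤ c := by
  rw [Nat.mul_sub]
  omega

theorem stmt1_general (R : α → α → α → Prop)
    (B C : Finset α) (hCB : C ⊆ B)
    (hd : ∀ X : Finset α, X ⊆ B → 0 ≤ d0 R X) :
    (4 < C.card → mult R B C ≤ 1) ∧
    (C.card = 4 → mult R B C ≤ 2) ∧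
    (C.card = 3 → mult R B C ≤ 3) ∧
    (3 ≤ C.card → mult R B C * (C.card - 2) ≤ C.card) := by
  have key := mult_mul_card_le R hCB hd
  have bound := mul_sub_two_le_of_mul_le key
  refine ⟨fun h4 => ?_, fun h4 => ?_, fun h3 => ?_, fun _ => bound⟩
  · by_contra! hm
    have : 2 * (C.card - 2) ≤ mult R B C * (C.card - 2) := Nat.mul_le_mul_right _ hm
    omega
  · rw [h4] at key; omega
  · rw [h3] at key; omega

/-- if every subset of the ambient structure has nonnegative predimension,
then a clique `C` with `|C| > 4` has multiplicity at most 1, with `|C| = 4` at most 2,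
and with `|C| = 3` at most 3; equivalently `m(C)·(|C|-2) ≤ |C|` for `|C| ≥ 3`. -/
theorem stmt1 (R : α → α → α → Prop) (hR : SymIrr R)
    (B C : Finset α) (hCB : C ⊆ B)
    (hd : ∀ X : Finset α, X ⊆ B → 0 ≤ d0 R X) :
    (4 < C.card → mult R B C ≤ 1) ∧
    (C.card = 4 → mult R B C ≤ 2) ∧
    (C.card = 3 → mult R B C ≤ 3) ∧
    (3 ≤ C.card → mult R B C * (C.card - 2) ≤ C.card) :=
  stmt1_general R B C hCB hd
end

section
/- Let D be a simple S-amalgam of B₁ and B₂ over A = B₁ ∩ B₂. Then d₀ₛ(B₂/A) = d₀ₛ(B₂/B₁). Moreover, if A ≤ₛ B₂ then B₁ ≤ₛ D, and if additionally A ≤ₛ B₁ then A ≤ₛ D. -/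
/-!
The predimension `d₀ₛ` is modular on a pair `U, V` as soon as every clique either meets
`U ∩ V` in at least three points (there `|·|*` is `|·| - 2`, hence modular) or has its
trace on one of `U, V` contained in the other. In a simple amalgam every pair
`A ⊆ U ⊆ B₁`, `A ⊆ V ⊆ B₂` has this property, so `d₀ₛ(U ∪ V) + d₀ₛ(A) = d₀ₛ(U) + d₀ₛ(V)`;
the three claims follow by taking `(U, V)` to be `(B₁, B₂)`, `(B₁, A ∪ (X ∩ B₂))` and
`(A ∪ (X ∩ B₁), A ∪ (X ∩ B₂))`.
-/

variable {α : Type*} [DecidableEq α] {β : Type*} [DecidableEq β]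

/-- `|X|* = max(0, |X| - 2)`. -/
def cardStar (X : Finset α) : ℤ := max 0 ((X.card : ℤ) - 2)

/-- An S-structure: a carrier set together with a pre-multiplicity function `pm` on
finite sets (its support being the set of declared maximal cliques, each a subset of the
carrier of size `≥ 3`, with pre-multiplicity at most 3), such that every finite set meets
only finitely many cliques in `≥ 3` points, and the associated multiplicity function
`m(D) = Σ_{D ⊆ C} pm C` satisfies the validity bound `m(D)·(|D|-2) ≤ |D|`. -/
structure SStruct (α : Type*) [DecidableEq α] where
  carrier : Set α
  pm : Finset α → ℕ
  pm_le : ∀ C, pm C ≤ 3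
  pm_supp : ∀ C, pm C ≠ 0 → ↑C ⊆ carrier ∧ 3 ≤ C.card
  finite_meets : ∀ X : Finset α, {C : Finset α | pm C ≠ 0 ∧ 3 ≤ (C ∩ X).card}.Finite
  valid : ∀ D : Finset α, 3 ≤ D.card →
    (∑ᶠ C ∈ {C : Finset α | D ⊆ C}, pm C) * (D.card - 2) ≤ D.card

/-- The S-predimension of a finite subset `X` of the ambient S-structure `N`:
`d₀ₛ(X) = |X| - Σ_C pm(C)·|C ∩ X|*` (the induced cliques on `X` are the `C ∩ X`). -/
noncomputable def d0s (N : SStruct α) (X : Finset α) : ℤ :=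
  (X.card : ℤ) - ∑ᶠ C : Finset α, (N.pm C : ℤ) * cardStar (C ∩ X)

/-- A finite subset `A` is strong (self-sufficient) in `B`: `d₀ₛ(X/A) ≥ 0` for every
finite `X ⊆ B`. -/
def FinStrongIn (N : SStruct α) (A : Finset α) (B : Set α) : Prop :=
  ↑A ⊆ B ∧ ∀ X : Finset α, ↑X ⊆ B → d0s N A ≤ d0s N (X ∪ A)

/-- `A ≤ₛ B` for arbitrary (possibly infinite) subsets `A ⊆ B` of the ambient
S-structure `N`: every finite `D ⊆ A` strong in `A` is strong in `B`. -/
def StrongIn (N : SStruct α) (A B : Set α) : Prop :=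
  A ⊆ B ∧ ∀ D : Finset α, ↑D ⊆ A → FinStrongIn N D A → FinStrongIn N D B

/-- The associated multiplicity function: `m(X) = Σ_{X ⊆ C} pm C`. -/
noncomputable def multFun (N : SStruct α) (X : Finset α) : ℕ :=
  ∑ᶠ C ∈ {C : Finset α | X ⊆ C}, N.pm C

open Finset

lemma cardStar_of_three_le {ι : Type*} {X : Finset ι} (h : 3 ≤ #X) :
    cardStar X = (#X : ℤ) - 2 :=
  max_eq_right (by omega)

lemma cardStar_of_lt_three {ι : Type*} {X : Finset ι} (h : #X < 3) : cardStar X = 0 :=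
  max_eq_left (by omega)

lemma cardStar_union_add_inter {P Q : Finset α} (h : 3 ≤ #(P ∩ Q) ∨ P ⊆ Q ∨ Q ⊆ P) :
    cardStar (P ∪ Q) + cardStar (P ∩ Q) = cardStar P + cardStar Q := by
  rcases h with h | h | h
  · have hP : 3 ≤ #P := h.trans (card_le_card inter_subset_left)
    have hQ : 3 ≤ #Q := h.trans (card_le_card inter_subset_right)
    have hPQ : 3 ≤ #(P ∪ Q) := hP.trans (card_le_card subset_union_left)
    have hcard : (#(P ∪ Q) : ℤ) + #(P ∩ Q) = #P + #Q := by
      exact_mod_cast card_union_add_card_inter P Q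
    rw [cardStar_of_three_le h, cardStar_of_three_le hP, cardStar_of_three_le hQ,
      cardStar_of_three_le hPQ]
    linarith
  · rw [union_eq_right.mpr h, inter_eq_left.mpr h, add_comm]
  · rw [union_eq_left.mpr h, inter_eq_right.mpr h]

lemma SStruct.support_pm_mul_cardStar_finite (N : SStruct α) (X : Finset α) :
    (Function.support fun C => (N.pm C : ℤ) * cardStar (C ∩ X)).Finite := by
  refine (N.finite_meets X).subset fun C hC => ?_
  simp only [Function.mem_support, mul_ne_zero_iff, Nat.cast_ne_zero] at hC
  refine ⟨hC.1, not_lt.mp fun h => hC.2 (cardStar_of_lt_three h)⟩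

lemma d0s_union_add_inter (N : SStruct α) {U V : Finset α}
    (h : ∀ C, N.pm C ≠ 0 → 3 ≤ #(C ∩ (U ∩ V)) ∨ C ∩ U ⊆ V ∨ C ∩ V ⊆ U) :
    d0s N (U ∪ V) + d0s N (U ∩ V) = d0s N U + d0s N V := by
  have hclique : ∀ C, (N.pm C : ℤ) * cardStar (C ∩ (U ∪ V)) + N.pm C * cardStar (C ∩ (U ∩ V))
      = N.pm C * cardStar (C ∩ U) + N.pm C * cardStar (C ∩ V) := by
    intro C
    rcases eq_or_ne (N.pm C) 0 with h0 | h0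
    · simp [h0]
    rw [← mul_add, ← mul_add, inter_union_distrib_left, inter_inter_distrib_left,
      cardStar_union_add_inter]
    rcases h C h0 with h3 | hUV | hVU
    · exact Or.inl (by rwa [← inter_inter_distrib_left])
    · exact Or.inr (Or.inl (subset_inter inter_subset_left hUV))
    · exact Or.inr (Or.inr (subset_inter inter_subset_left hVU))
  have hsum := finsum_congr hclique
  rw [finsum_add_distrib (N.support_pm_mul_cardStar_finite _)
      (N.support_pm_mul_cardStar_finite _),
    finsum_add_distrib (N.support_pm_mul_cardStar_finite _)
      (N.support_pm_mul_cardStar_finite _)] at hsum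
  have hcard : (#(U ∪ V) : ℤ) + #(U ∩ V) = #U + #V := by
    exact_mod_cast card_union_add_card_inter U V
  unfold d0s
  linarith

lemma d0s_union_add_inter_of_amalgam (N : SStruct α) {B1 B2 U V : Finset α}
    (hamal : ∀ C : Finset α, N.pm C ≠ 0 → #(C ∩ (B1 ∩ B2)) < 3 → C ⊆ B1 ∨ C ⊆ B2)
    (hAU : B1 ∩ B2 ⊆ U) (hUB : U ⊆ B1) (hAV : B1 ∩ B2 ⊆ V) (hVB : V ⊆ B2) :
    d0s N (U ∪ V) + d0s N (B1 ∩ B2) = d0s N U + d0s N V := by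
  have hUV : U ∩ V = B1 ∩ B2 :=
    (inter_subset_inter hUB hVB).antisymm (subset_inter hAU hAV)
  rw [← hUV]
  refine d0s_union_add_inter N fun C hC => ?_
  rw [hUV]
  by_cases h3 : 3 ≤ #(C ∩ (B1 ∩ B2))
  · exact Or.inl h3
  rcases hamal C hC (not_le.mp h3) with hC1 | hC2
  · exact Or.inr (Or.inr fun x hx =>
      hAU (mem_inter.mpr ⟨hC1 (mem_inter.mp hx).1, hVB (mem_inter.mp hx).2⟩))
  · exact Or.inr (Or.inl fun x hx =>
      hAV (mem_inter.mpr ⟨hUB (mem_inter.mp hx).2, hC2 (mem_inter.mp hx).1⟩))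

lemma FinStrongIn.le_d0s_inter_union {N : SStruct α} {A B X : Finset α}
    (h : FinStrongIn N A ↑B) : d0s N A ≤ d0s N (A ∪ (X ∩ B)) := by
  rw [union_comm]
  exact h.2 _ (coe_subset.mpr inter_subset_right)

/-- let `D` be a simple S-amalgam of `B₁` and `B₂` over `A = B₁ ∩ B₂`
(its carrier is `B₁ ∪ B₂` and every maximal clique of `D` not extending a clique of `A`
lies entirely within `B₁` or within `B₂`). Then `d₀ₛ(B₂/A) = d₀ₛ(B₂/B₁)`; moreover if
`A ≤ₛ B₂` then `B₁ ≤ₛ D`, and if additionally `A ≤ₛ B₁` then `A ≤ₛ D`. -/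
theorem stmt9 (D : SStruct α) (B1 B2 : Finset α)
    (hcar : D.carrier = ↑B1 ∪ ↑B2)
    (hamal : ∀ C : Finset α, D.pm C ≠ 0 → (C ∩ (B1 ∩ B2)).card < 3 →
      C ⊆ B1 ∨ C ⊆ B2) :
    (d0s D (B1 ∪ B2) - d0s D B1 = d0s D B2 - d0s D (B1 ∩ B2)) ∧
    (FinStrongIn D (B1 ∩ B2) ↑B2 → FinStrongIn D B1 D.carrier) ∧
    (FinStrongIn D (B1 ∩ B2) ↑B2 → FinStrongIn D (B1 ∩ B2) ↑B1 →
      FinStrongIn D (B1 ∩ B2) D.carrier) := by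
  have hsub : ∀ X : Finset α, ↑X ⊆ D.carrier → X ⊆ B1 ∪ B2 := fun X hX => by
    rwa [← coe_subset, coe_union, ← hcar]
  have hA1 : B1 ∩ B2 ⊆ B1 := inter_subset_left
  have hA2 : B1 ∩ B2 ⊆ B2 := inter_subset_right
  refine ⟨?_, fun h2 => ⟨hcar ▸ Set.subset_union_left, fun X hX => ?_⟩,
    fun h2 h1 => ⟨hcar ▸ (coe_subset.mpr hA1).trans Set.subset_union_left, fun X hX => ?_⟩⟩
  · linarith [d0s_union_add_inter_of_amalgam D hamal hA1 subset_rfl hA2 subset_rfl]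
  · have hX : X ∪ B1 = B1 ∪ (B1 ∩ B2 ∪ X ∩ B2) := by
      have hXB := hsub X hX
      ext x; have := @hXB x; simp only [mem_union, mem_inter] at this ⊢; tauto
    rw [hX]
    linarith [h2.le_d0s_inter_union (X := X),
      d0s_union_add_inter_of_amalgam D hamal (V := B1 ∩ B2 ∪ X ∩ B2) hA1 subset_rfl subset_union_left
        (union_subset hA2 inter_subset_right)]
  · have hX : X ∪ B1 ∩ B2 = (B1 ∩ B2 ∪ X ∩ B1) ∪ (B1 ∩ B2 ∪ X ∩ B2) := by
      have hXB := hsub X hX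
      ext x; have := @hXB x; simp only [mem_union, mem_inter] at this ⊢; tauto
    rw [hX]
    linarith [h1.le_d0s_inter_union (X := X), h2.le_d0s_inter_union (X := X),
      d0s_union_add_inter_of_amalgam D hamal (U := B1 ∩ B2 ∪ X ∩ B1) (V := B1 ∩ B2 ∪ X ∩ B2)
        subset_union_left (union_subset hA1 inter_subset_right)
        subset_union_left (union_subset hA2 inter_subset_right)]
end

section
/- Let A be a finite R-structure with d₀(X) ≥ 0 for every X ⊆ A, and let K = {C₁,…,Cₙ} be a set of maximal S-cliques in A whose witnesses all lie in A. Then there exists a clique Cₖ ∈ K such that the number of generating relations of Cₖ shared with other cliques of K is at most 2, i.e. |RW(Cₖ) ∩ ⋃_{i≠k} RW(Cᵢ)| ≤ 2. -/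
/-!
Suppose every clique of `K` shares at least three of its relations. Every shared relation is the
union of two witness pairs, so the shared relations form a family `S` of relations on the set `X`
of witnesses, and `d₀(X) ≥ 0` gives `|S| ≤ |X|`. A witness `e` of a clique lies in all of that
clique's shared relations, so every point of `X` lies in at least three members of `S`; double
counting the incidences of the three-element sets of `S` then forces every point of `X` to lie
in exactly three of them. Consequently the shared relations of a clique are exactly the members of
`S` through any one of its witnesses. Two cliques sharing a relation have a common witness, hence
the same shared relations, all of which lie in both of them; by the sharing lemma there is only
one such relation, a contradiction.
-/

variable {α : Type*} [DecidableEq α]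

/-- `(C, {x,y})` is an S-clique. -/
def IsCliqueW (R : α → α → α → Prop) (C : Finset α) (x y : α) : Prop :=
  3 ≤ C.card ∧ x ≠ y ∧ x ∉ C ∧ y ∉ C ∧ ∀ c ∈ C, R c x y

/-- `(C, {x,y})` is a maximal S-clique in `A`. -/
def IsMaxCliqueIn (R : α → α → α → Prop) (A : Set α) (C : Finset α) (x y : α) : Prop :=
  IsCliqueW R C x y ∧ ↑C ⊆ A ∧ ∀ a ∈ A, a ∉ C → a ≠ x → a ≠ y → ¬ R a x y

/-- A clique presented as a pair (universe, witness pair). -/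
def IsMaxCliqueP (R : α → α → α → Prop) (A : Finset α) (p : Finset α × Finset α) : Prop :=
  ∃ x y : α, x ≠ y ∧ p.2 = {x, y} ∧ IsMaxCliqueIn R (↑A) p.1 x y

/-- `RW(C, w)`: the generating relations `{c} ∪ w`, `c ∈ C`, of the clique `(C, w)`. -/
def RW (p : Finset α × Finset α) : Finset (Finset α) :=
  p.1.image (fun c => insert c p.2)

open Finset

section

variable {R : α → α → α → Prop}

-- `rCount R X` counts the `s ⊆ X` with `IsRelTriple R s`.
def IsRelTriple (R : α → α → α → Prop) (s : Finset α) : Prop :=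
  ∃ x y z : α, x ≠ y ∧ x ≠ z ∧ y ≠ z ∧ s = {x, y, z} ∧ R x y z

theorem IsRelTriple.card_eq_three {s : Finset α} (hs : IsRelTriple R s) : #s = 3 := by
  obtain ⟨x, y, z, hxy, hxz, hyz, rfl, -⟩ := hs
  exact Finset.card_eq_three.2 ⟨x, y, z, hxy, hxz, hyz, rfl⟩

theorem card_le_rCount_s10 {S : Finset (Finset α)} {X : Finset α}
    (hS : ∀ s ∈ S, s ⊆ X ∧ IsRelTriple R s) : #S ≤ rCount R X := by
  have hfin : {s : Finset α | s ⊆ X ∧ IsRelTriple R s}.Finite :=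
    X.powerset.finite_toSet.subset fun s hs ↦ mem_powerset.2 hs.1
  rw [← Set.ncard_coe_finset S]
  exact Set.ncard_le_ncard (fun s hs ↦ hS s hs) hfin

theorem SymIrr.rel_of_pair_eq (hR : SymIrr R) {c x y x' y' : α}
    (h : ({x, y} : Finset α) = {x', y'}) (hc : R c x y) : R c x' y' := by
  have h' : ({x, y} : Set α) = {x', y'} := by
    simpa using congrArg (fun s : Finset α ↦ (s : Set α)) h
  rcases Set.pair_eq_pair_iff.1 h' with ⟨rfl, rfl⟩ | ⟨rfl, rfl⟩
  · exact hc
  · exact hR.2.1 _ _ _ hc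

theorem snd_subset_of_mem_RW {p : Finset α × Finset α} {s : Finset α} (hs : s ∈ RW p) :
    p.2 ⊆ s := by
  obtain ⟨c, -, rfl⟩ := mem_image.1 hs
  exact subset_insert c p.2

namespace IsMaxCliqueP

variable {A : Finset α} {p q : Finset α × Finset α}

theorem card_snd (hp : IsMaxCliqueP R A p) : #p.2 = 2 := by
  obtain ⟨x, y, hxy, hp2, -⟩ := hp
  rw [hp2, card_pair hxy]

theorem isRelTriple_of_mem_RW (hp : IsMaxCliqueP R A p) {s : Finset α} (hs : s ∈ RW p) :
    IsRelTriple R s := by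
  obtain ⟨x, y, hxy, hp2, ⟨-, -, hxC, hyC, hrel⟩, -, -⟩ := hp
  obtain ⟨c, hc, rfl⟩ := mem_image.1 hs
  have hcx : c ≠ x := fun h ↦ hxC (h ▸ hc)
  have hcy : c ≠ y := fun h ↦ hyC (h ▸ hc)
  exact ⟨c, x, y, hcx, hcy, hxy, by rw [hp2], hrel c hc⟩

theorem fst_subset_of_snd_eq (hR : SymIrr R) (hp : IsMaxCliqueP R A p)
    (hq : IsMaxCliqueP R A q) (h : p.2 = q.2) : p.1 ⊆ q.1 := by
  obtain ⟨x, y, -, hp2, ⟨-, -, hxC, hyC, hrel⟩, hpA, -⟩ := hp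
  obtain ⟨x', y', -, hq2, -, -, hmax⟩ := hq
  intro c hc
  by_contra hcq
  have hcw : c ∉ ({x', y'} : Finset α) := by
    rw [← hq2, ← h, hp2, mem_insert, mem_singleton]
    rintro (rfl | rfl)
    exacts [hxC hc, hyC hc]
  rw [mem_insert, mem_singleton, not_or] at hcw
  exact hmax c (hpA hc) hcq hcw.1 hcw.2
    (hR.rel_of_pair_eq (hp2.symm.trans (h.trans hq2)) (hrel c hc))

theorem eq_of_snd_eq (hR : SymIrr R) (hp : IsMaxCliqueP R A p) (hq : IsMaxCliqueP R A q)
    (h : p.2 = q.2) : p = q :=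
  Prod.ext
    ((hp.fst_subset_of_snd_eq hR hq h).antisymm (hq.fst_subset_of_snd_eq hR hp h.symm)) h

theorem eq_union_of_mem_RW (hR : SymIrr R) (hp : IsMaxCliqueP R A p)
    (hq : IsMaxCliqueP R A q) (hne : p ≠ q) {s : Finset α} (hsp : s ∈ RW p) (hsq : s ∈ RW q) :
    s = p.2 ∪ q.2 := by
  have hsnd : p.2 ≠ q.2 := fun h ↦ hne (hp.eq_of_snd_eq hR hq h)
  have hunion : 3 ≤ #(p.2 ∪ q.2) := by
    by_contra! hlt
    have hp' := eq_of_subset_of_card_le (subset_union_left (s₂ := q.2))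
      (by rw [hp.card_snd]; omega)
    have hq' := eq_of_subset_of_card_le (subset_union_right (s₁ := p.2))
      (by rw [hq.card_snd]; omega)
    exact hsnd (hp'.trans hq'.symm)
  refine (eq_of_subset_of_card_le
    (union_subset (snd_subset_of_mem_RW hsp) (snd_subset_of_mem_RW hsq)) ?_).symm
  rwa [(hp.isRelTriple_of_mem_RW hsp).card_eq_three]

theorem snd_inter_nonempty_of_mem_RW (hR : SymIrr R) (hp : IsMaxCliqueP R A p)
    (hq : IsMaxCliqueP R A q) (hne : p ≠ q) {s : Finset α} (hsp : s ∈ RW p) (hsq : s ∈ RW q) :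
    (p.2 ∩ q.2).Nonempty := by
  have hunion : #(p.2 ∪ q.2) = 3 := by
    rw [← hp.eq_union_of_mem_RW hR hq hne hsp hsq, (hp.isRelTriple_of_mem_RW hsp).card_eq_three]
  have := card_union_add_card_inter p.2 q.2
  rw [← card_pos]
  rw [hunion, hp.card_snd, hq.card_snd] at this
  omega

end IsMaxCliqueP

theorem card_filter_mem_eq_of_card_le {X : Finset α} {B : Finset (Finset α)} {k : ℕ}
    (hB : ∀ s ∈ B, s ⊆ X ∧ #s = k) (hcard : #B ≤ #X) (hdeg : ∀ x ∈ X, k ≤ #{s ∈ B | x ∈ s}) :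
    ∀ x ∈ X, #{s ∈ B | x ∈ s} = k := by
  have hincidences : ∑ x ∈ X, #{s ∈ B | x ∈ s} = ∑ s ∈ B, #(X ∩ s) := by
    simp_rw [← filter_mem_eq_inter, card_eq_sum_ones, sum_filter]
    exact sum_comm
  have hsum : ∑ x ∈ X, #{s ∈ B | x ∈ s} ≤ ∑ _x ∈ X, k :=
    calc ∑ x ∈ X, #{s ∈ B | x ∈ s} = ∑ _s ∈ B, k := by
          rw [hincidences]
          exact sum_congr rfl fun s hs ↦ by rw [inter_eq_right.2 (hB s hs).1, (hB s hs).2]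
      _ ≤ ∑ _x ∈ X, k := by
          simp only [sum_const, smul_eq_mul]
          exact Nat.mul_le_mul_right k hcard
  intro x hx
  exact ((sum_eq_sum_iff_of_le hdeg).1 ((sum_le_sum hdeg).antisymm hsum) x hx).symm

def sharedRW (K : Finset (Finset α × Finset α)) (p : Finset α × Finset α) : Finset (Finset α) :=
  RW p ∩ (K.erase p).biUnion RW

section SharedRelations

variable {K : Finset (Finset α × Finset α)} {p : Finset α × Finset α}

theorem mem_sharedRW {s : Finset α} :
    s ∈ sharedRW K p ↔ s ∈ RW p ∧ ∃ q ∈ K, q ≠ p ∧ s ∈ RW q := by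
  simp only [sharedRW, mem_inter, mem_biUnion, mem_erase]
  constructor
  · rintro ⟨hsp, q, ⟨hqp, hq⟩, hsq⟩
    exact ⟨hsp, q, hq, hqp, hsq⟩
  · rintro ⟨hsp, q, hq, hqp, hsq⟩
    exact ⟨hsp, q, ⟨hqp, hq⟩, hsq⟩

theorem sharedRW_subset_filter_mem (hp : p ∈ K) {e : α} (he : e ∈ p.2) :
    sharedRW K p ⊆ {s ∈ K.biUnion (sharedRW K) | e ∈ s} := fun _ hs ↦
  mem_filter.2 ⟨mem_biUnion.2 ⟨p, hp, hs⟩, snd_subset_of_mem_RW (mem_sharedRW.1 hs).1 he⟩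

variable {A : Finset α} (hR : SymIrr R) (hK : ∀ p ∈ K, IsMaxCliqueP R A p)
include hR hK

theorem subset_biUnion_snd_and_isRelTriple {s : Finset α} (hs : s ∈ K.biUnion (sharedRW K)) :
    s ⊆ K.biUnion Prod.snd ∧ IsRelTriple R s := by
  obtain ⟨p, hp, hs⟩ := mem_biUnion.1 hs
  obtain ⟨hsp, q, hq, hqp, hsq⟩ := mem_sharedRW.1 hs
  refine ⟨?_, (hK p hp).isRelTriple_of_mem_RW hsp⟩
  rw [(hK p hp).eq_union_of_mem_RW hR (hK q hq) hqp.symm hsp hsq]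
  exact union_subset (subset_biUnion_of_mem Prod.snd hp) (subset_biUnion_of_mem Prod.snd hq)

theorem card_sharedRW_le_one_of_eq {q : Finset α × Finset α} (hp : p ∈ K) (hq : q ∈ K)
    (hne : p ≠ q) (h : sharedRW K p = sharedRW K q) : #(sharedRW K p) ≤ 1 := by
  refine card_le_one.2 fun s hs t ht ↦ ?_
  have hsq := (mem_sharedRW.1 (h ▸ hs)).1
  have htq := (mem_sharedRW.1 (h ▸ ht)).1
  rw [(hK p hp).eq_union_of_mem_RW hR (hK q hq) hne (mem_sharedRW.1 hs).1 hsq,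
    (hK p hp).eq_union_of_mem_RW hR (hK q hq) hne (mem_sharedRW.1 ht).1 htq]

theorem card_biUnion_sharedRW_le (hd : ∀ X ⊆ A, 0 ≤ d0 R X) (hKA : ∀ p ∈ K, p.2 ⊆ A) :
    #(K.biUnion (sharedRW K)) ≤ #(K.biUnion Prod.snd) := by
  have hrel : #(K.biUnion (sharedRW K)) ≤ rCount R (K.biUnion Prod.snd) := by
    exact card_le_rCount_s10 fun s hs ↦ subset_biUnion_snd_and_isRelTriple hR hK hs
  have hd0 := hd _ (biUnion_subset.2 hKA)
  rw [d0] at hd0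
  omega

end SharedRelations

end

/-- if every subset of the finite `R`-structure `A` has nonnegative
predimension and `K` is a (nonempty) set of maximal S-cliques of `A` all of whose
witnesses lie in `A`, then some clique in `K` shares at most 2 of its generating
relations with the other cliques of `K`. -/
theorem stmt10 (R : α → α → α → Prop) (hR : SymIrr R)
    (A : Finset α) (hd : ∀ X : Finset α, X ⊆ A → 0 ≤ d0 R X)
    (K : Finset (Finset α × Finset α)) (hKne : K.Nonempty)
    (hK : ∀ p ∈ K, IsMaxCliqueP R A p ∧ p.2 ⊆ A) :
    ∃ p ∈ K, (RW p ∩ (K.erase p).biUnion RW).card ≤ 2 := by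
  by_contra! hshared
  replace hshared : ∀ p ∈ K, 3 ≤ #(sharedRW K p) := hshared
  have hmax : ∀ p ∈ K, IsMaxCliqueP R A p := fun p hp ↦ (hK p hp).1
  have hdeg : ∀ e ∈ K.biUnion Prod.snd, #{s ∈ K.biUnion (sharedRW K) | e ∈ s} = 3 := by
    refine card_filter_mem_eq_of_card_le (fun s hs ↦ ?_)
      (card_biUnion_sharedRW_le hR hmax hd fun p hp ↦ (hK p hp).2) fun e he ↦ ?_
    · obtain ⟨hsX, hrel⟩ := subset_biUnion_snd_and_isRelTriple hR hmax hs
      exact ⟨hsX, hrel.card_eq_three⟩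
    · obtain ⟨p, hp, he⟩ := mem_biUnion.1 he
      exact (hshared p hp).trans (card_le_card (sharedRW_subset_filter_mem hp he))
  have hsharedRW_eq : ∀ p ∈ K, ∀ e ∈ p.2, sharedRW K p = {s ∈ K.biUnion (sharedRW K) | e ∈ s} :=
    fun p hp e he ↦ eq_of_subset_of_card_le (sharedRW_subset_filter_mem hp he)
      (by rw [hdeg e (mem_biUnion.2 ⟨p, hp, he⟩)]; exact hshared p hp)
  obtain ⟨p, hp⟩ := hKne
  obtain ⟨s, hs⟩ := card_pos.1 (by linarith [hshared p hp] : 0 < #(sharedRW K p))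
  obtain ⟨hsp, q, hq, hqp, hsq⟩ := mem_sharedRW.1 hs
  obtain ⟨e, he⟩ := (hmax p hp).snd_inter_nonempty_of_mem_RW hR (hmax q hq) hqp.symm hsp hsq
  have h := card_sharedRW_le_one_of_eq hR hmax hp hq hqp.symm
    ((hsharedRW_eq p hp e (mem_inter.1 he).1).trans (hsharedRW_eq q hq e (mem_inter.1 he).2).symm)
  linarith [hshared p hp]
end
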